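/- arXiv:2205.08401 — 3 statements merged into one kernel-verified Lean document; each statement's English description precedes it below -/
import Mathlib

section
/- (Homotopy-category form of the paper's main general theorem, Theorem 3.10/"Li-adj-he".) Suppose i : C ⥤ D is fully faithful and W is a morphism property on C*-A that contains all isomorphisms and satisfies two-out-of-three; let W^i be the right-induced property on D*-A. Then there exists a left adjoint L of i^* such that L sends every morphism of W to a morphism of W^i, i^* sends every morphism of W^i to a morphism of W, and the induced functors L̄ : (C*-A)[W⁻¹] → (D*-A)[(W^i)⁻¹] and ī^* : (D*-A)[(W^i)⁻¹] → (C*-A)[W⁻¹] between the localized categories are mutually quasi-inverse equivalences of categories. -/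
open CategoryTheory CategoryTheory.Limits

universe v u

/-- The category of pointed diagrams: functors `C ⥤ A` sending every zero object of `C`
to a terminal object of `A`. -/
abbrev PtdDiag (C : Type v) [SmallCategory C] (A : Type u) [Category.{v} A] :=
  ObjectProperty.FullSubcategory (fun X : C ⥤ A => ∀ c : C, IsZero c → Nonempty (IsTerminal (X.obj c)))

/-- The restriction (precomposition) functor `i^* : D*-A ⥤ C*-A` induced by a
basepoint-preserving functor `i : C ⥤ D`. -/
def istar {C D : Type v} [SmallCategory C] [SmallCategory D]
    (zC : C) (hzC : IsZero zC) (i : C ⥤ D) (hi : IsZero (i.obj zC))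
    (A : Type u) [Category.{v} A] :
    PtdDiag D A ⥤ PtdDiag C A :=
  ObjectProperty.lift _
    (ObjectProperty.ι _ ⋙ (Functor.whiskeringLeft C D A).obj i)
    (fun Y c hc => Y.property (i.obj c) (hi.of_iso (i.mapIso (hc.iso hzC))))


/-- The functor `E[V⁻¹] ⥤ E'[V'⁻¹]` induced on localizations by a relative functor
`F : E ⥤ E'` (a functor sending morphisms of `V` to morphisms of `V'`); it satisfies
`V.Q ⋙ inducedLoc V V' F h = F ⋙ V'.Q`. -/
noncomputable abbrev inducedLoc {E : Type*} {E' : Type*} [Category E] [Category E']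
    (V : MorphismProperty E) (V' : MorphismProperty E') (F : E ⥤ E')
    (h : ∀ ⦃X Y : E⦄ (f : X ⟶ Y), V f → V' (F.map f)) :
    V.Localization ⥤ V'.Localization :=
  CategoryTheory.Localization.Construction.lift (F ⋙ V'.Q)
    (fun _ _ f hf => Localization.inverts V'.Q V' (F.map f) (h f hf))

/-! Left Kan extension along the fully faithful functor `i` is fully faithful, so the unit
`X ⟶ (Lan_i X) ∘ i` of `Lan_i ⊣ i^*` is invertible. In particular `Lan_i X` sends the zero object
`i zC` to `X zC`, hence it restricts to a left adjoint `L` of `i^*` on pointed diagrams, still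
with invertible unit. Two-out-of-three applied to the naturality square of the unit shows that
`L` sends `W` into `W^i`, and applied to the triangle identity `η_{i^* Y} ≫ i^*(ε_Y) = 𝟙` that
the counit lies in `W^i`. An adjunction whose unit and counit are weak equivalences descends to
mutually quasi-inverse functors between the localizations. -/

section Localization

variable {E E' : Type*} [Category E] [Category E']
  (V : MorphismProperty E) (V' : MorphismProperty E')

lemma Q_comp_inducedLoc (F : E ⥤ E') (hF : ∀ ⦃X Y : E⦄ (f : X ⟶ Y), V f → V' (F.map f)) :
    V.Q ⋙ inducedLoc V V' F hF = F ⋙ V'.Q :=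
  Localization.Construction.fac _ _

lemma isIso_whiskerRight_Q {E'' : Type*} [Category E''] {F G : E'' ⥤ E} (τ : F ⟶ G)
    (hτ : ∀ X, V (τ.app X)) : IsIso (Functor.whiskerRight τ V.Q) :=
  have (X : E'') : IsIso ((Functor.whiskerRight τ V.Q).app X) :=
    Localization.inverts V.Q V _ (hτ X)
  NatIso.isIso_of_isIso_app _

lemma nonempty_inducedLoc_comp_inducedLoc_iso_id (F : E ⥤ E') (G : E' ⥤ E)
    (hF : ∀ ⦃X Y : E⦄ (f : X ⟶ Y), V f → V' (F.map f))
    (hG : ∀ ⦃X Y : E'⦄ (f : X ⟶ Y), V' f → V (G.map f)) (e : F ⋙ G ⋙ V.Q ≅ V.Q) :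
    Nonempty (inducedLoc V V' F hF ⋙ inducedLoc V' V G hG ≅ 𝟭 V.Localization) := by
  have hcomp : V.Q ⋙ inducedLoc V V' F hF ⋙ inducedLoc V' V G hG = F ⋙ G ⋙ V.Q := by
    rw [← Functor.assoc, Q_comp_inducedLoc, Functor.assoc, Q_comp_inducedLoc]
  exact ⟨(Localization.fullyFaithfulWhiskeringLeft V.Q V V.Localization).preimageIso
    (eqToIso hcomp ≪≫ e ≪≫ V.Q.rightUnitor.symm)⟩

theorem CategoryTheory.Adjunction.nonempty_inducedLoc_isos {F : E ⥤ E'} {G : E' ⥤ E} (adj : F ⊣ G)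
    (hF : ∀ ⦃X Y : E⦄ (f : X ⟶ Y), V f → V' (F.map f))
    (hG : ∀ ⦃X Y : E'⦄ (f : X ⟶ Y), V' f → V (G.map f))
    (hu : ∀ X, V (adj.unit.app X)) (hc : ∀ Y, V' (adj.counit.app Y)) :
    Nonempty (inducedLoc V V' F hF ⋙ inducedLoc V' V G hG ≅ 𝟭 V.Localization) ∧
    Nonempty (inducedLoc V' V G hG ⋙ inducedLoc V V' F hF ≅ 𝟭 V'.Localization) :=
  have := isIso_whiskerRight_Q V adj.unit hu
  have := isIso_whiskerRight_Q V' adj.counit hc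
  ⟨nonempty_inducedLoc_comp_inducedLoc_iso_id V V' F G hF hG
      (asIso (Functor.whiskerRight adj.unit V.Q)).symm,
    nonempty_inducedLoc_comp_inducedLoc_iso_id V' V G F hG hF
      (asIso (Functor.whiskerRight adj.counit V'.Q))⟩

end Localization

section TwoOutOfThree

variable {E E' : Type*} [Category E] [Category E'] {F : E ⥤ E'} {G : E' ⥤ E} (adj : F ⊣ G)
  {W : MorphismProperty E} [W.HasTwoOutOfThreeProperty]

lemma CategoryTheory.Adjunction.map_mem_inverseImage_of_unit_mem
    (hu : ∀ X, W (adj.unit.app X)) {X Y : E} {f : X ⟶ Y} (hf : W f) :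
    W.inverseImage G (F.map f) := by
  have : W (adj.unit.app X ≫ G.map (F.map f)) :=
    (adj.unit_naturality f).symm ▸ W.comp_mem _ _ hf (hu Y)
  exact W.of_precomp _ _ (hu X) this

lemma CategoryTheory.Adjunction.counit_mem_inverseImage_of_unit_mem [W.ContainsIdentities]
    (hu : ∀ X, W (adj.unit.app X)) (Y : E') :
    W.inverseImage G (adj.counit.app Y) := by
  have : W (adj.unit.app (G.obj Y) ≫ G.map (adj.counit.app Y)) := by
    rw [adj.right_triangle_components]
    exact W.id_mem _
  exact W.of_precomp _ _ (hu (G.obj Y)) this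

end TwoOutOfThree

section PointedLan

variable {C D : Type v} [SmallCategory C] [SmallCategory D]
  (zC : C) (hzC : IsZero zC) (i : C ⥤ D) (hi : IsZero (i.obj zC)) [i.Full] [i.Faithful]
  (A : Type u) [Category.{v} A] [HasColimits A]

noncomputable def ptdLan : PtdDiag C A ⥤ PtdDiag D A :=
  ObjectProperty.lift _ (ObjectProperty.ι _ ⋙ i.lan)
    (fun X _ hd => ⟨IsTerminal.ofIso
      (IsTerminal.ofIso (X.property zC hzC).some (asIso ((i.lanUnit.app X.obj).app zC)))
      ((i.lan.obj X.obj).mapIso (hi.iso hd))⟩)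

noncomputable def ptdLanAdjunction : ptdLan zC hzC i hi A ⊣ istar zC hzC i hi A :=
  (i.lanAdjunction A).restrictFullyFaithful
    (ObjectProperty.fullyFaithfulι _) (ObjectProperty.fullyFaithfulι _)
    (ObjectProperty.liftCompιIso _ _ _).symm (ObjectProperty.liftCompιIso _ _ _).symm

noncomputable def fullyFaithfulPtdLan : (ptdLan zC hzC i hi A).FullyFaithful :=
  Functor.FullyFaithful.ofCompFaithful (G := ObjectProperty.ι _)
    ((ObjectProperty.fullyFaithfulι _).comp (i.lanAdjunction A).fullyFaithfulLOfIsIsoUnit)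

instance : IsIso (ptdLanAdjunction zC hzC i hi A).unit :=
  have := (fullyFaithfulPtdLan zC hzC i hi A).full
  have := (fullyFaithfulPtdLan zC hzC i hi A).faithful
  inferInstance

end PointedLan

theorem Li_adj_he_general {C D : Type v} [SmallCategory C] [SmallCategory D]
    (zC : C) (hzC : IsZero zC) (i : C ⥤ D) (hi : IsZero (i.obj zC))
    [i.Full] [i.Faithful]
    (A : Type u) [Category.{v} A] [HasColimits A]
    (W : MorphismProperty (PtdDiag C A))
    (hiso : MorphismProperty.isomorphisms (PtdDiag C A) ≤ W)
    (h23 : W.HasTwoOutOfThreeProperty) :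
    ∃ (L : PtdDiag C A ⥤ PtdDiag D A) (_ : L ⊣ istar zC hzC i hi A)
      (hL : ∀ ⦃X Y : PtdDiag C A⦄ (f : X ⟶ Y), W f →
        (W.inverseImage (istar zC hzC i hi A)) (L.map f)),
      Nonempty (inducedLoc W (W.inverseImage (istar zC hzC i hi A)) L hL ⋙
          inducedLoc (W.inverseImage (istar zC hzC i hi A)) W (istar zC hzC i hi A)
            (fun _ _ _ hf => hf) ≅ 𝟭 W.Localization) ∧
      Nonempty (inducedLoc (W.inverseImage (istar zC hzC i hi A)) W (istar zC hzC i hi A)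
            (fun _ _ _ hf => hf) ⋙
          inducedLoc W (W.inverseImage (istar zC hzC i hi A)) L hL ≅
          𝟭 (W.inverseImage (istar zC hzC i hi A)).Localization) := by
  let adj := ptdLanAdjunction zC hzC i hi A
  have : W.ContainsIdentities := ⟨fun X => hiso _ (.infer_property _)⟩
  have hu (X : PtdDiag C A) : W (adj.unit.app X) := hiso _ (.infer_property _)
  have hL : ∀ ⦃X Y : PtdDiag C A⦄ (f : X ⟶ Y), W f →
      W.inverseImage (istar zC hzC i hi A) ((ptdLan zC hzC i hi A).map f) :=
    fun _ _ _ hf => adj.map_mem_inverseImage_of_unit_mem hu hf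
  exact ⟨_, adj, hL, adj.nonempty_inducedLoc_isos _ _ hL (fun _ _ _ hf => hf) hu
    (adj.counit_mem_inverseImage_of_unit_mem hu)⟩

/-- **Theorem `Li-adj-he`** (homotopy-category form). Suppose `i : C ⥤ D` is fully
faithful and `W` is a morphism property on `C*-A` containing all isomorphisms and
satisfying two-out-of-three, with right-induced property `W^i = (i^*)⁻¹ W` on `D*-A`.
Then there is a left adjoint `L` of `i^*` sending `W` into `W^i` (while `i^*` sends
`W^i` into `W` by definition), such that the induced functors `L̄` and `ī^*` between
the localized categories are mutually quasi-inverse equivalences of categories. -/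
theorem Li_adj_he {C D : Type v} [SmallCategory C] [SmallCategory D]
    (zC : C) (hzC : IsZero zC) (i : C ⥤ D) (hi : IsZero (i.obj zC))
    [i.Full] [i.Faithful]
    (A : Type u) [Category.{v} A] [HasLimits A] [HasColimits A]
    (W : MorphismProperty (PtdDiag C A))
    (hiso : MorphismProperty.isomorphisms (PtdDiag C A) ≤ W)
    (h23 : W.HasTwoOutOfThreeProperty) :
    ∃ (L : PtdDiag C A ⥤ PtdDiag D A) (_ : L ⊣ istar zC hzC i hi A)
      (hL : ∀ ⦃X Y : PtdDiag C A⦄ (f : X ⟶ Y), W f →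
        (W.inverseImage (istar zC hzC i hi A)) (L.map f)),
      Nonempty (inducedLoc W (W.inverseImage (istar zC hzC i hi A)) L hL ⋙
          inducedLoc (W.inverseImage (istar zC hzC i hi A)) W (istar zC hzC i hi A)
            (fun _ _ _ hf => hf) ≅ 𝟭 W.Localization) ∧
      Nonempty (inducedLoc (W.inverseImage (istar zC hzC i hi A)) W (istar zC hzC i hi A)
            (fun _ _ _ hf => hf) ⋙
          inducedLoc W (W.inverseImage (istar zC hzC i hi A)) L hL ≅
          𝟭 (W.inverseImage (istar zC hzC i hi A)).Localization) :=
  Li_adj_he_general zC hzC i hi A W hiso h23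
end

section
/- (Proposition "Li-adj".) The precomposition functor i^* : D*-A ⥤ C*-A admits a left adjoint L, i.e., there is an adjunction L ⊣ i^* of categories L : C*-A ⥤ D*-A and i^* : D*-A ⥤ C*-A. -/
/-!
Restriction along `i` has the left Kan extension `i.lan` as left adjoint on all diagrams, so it
suffices that pointed diagrams form a reflective subcategory of `D ⥤ A`. The reflection of `Z`
collapses `Z` at the zero object `z`: it is the pushout of `Z ← const (Z z) → const ⊤`. Evaluated
at `z` the left leg is an isomorphism, so the pushout is terminal there; and a natural
transformation out of a constant diagram is determined by its component at the initial object `z`,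
so `const ⊤` has a unique map to every pointed diagram and the pushout has the universal property
of the reflection.
-/

open CategoryTheory CategoryTheory.Limits

universe v u

section Pointing

variable {D : Type*} [Category D] {A : Type*} [Category A] {z : D}

lemma natTrans_ext_of_isInitial (hz : IsInitial z) {X : A} {W : D ⥤ A}
    {f g : (Functor.const D).obj X ⟶ W} (h : f.app z = g.app z) : f = g := by
  ext d
  have hf := f.naturality (hz.to d)
  have hg := g.naturality (hz.to d)
  dsimp at hf hg
  rw [Category.id_comp] at hf hg
  rw [hf, hg, h]

variable [HasPushouts A] [HasTerminal A]

noncomputable def pointingObj (hz : IsInitial z) (Z : D ⥤ A) : D ⥤ A :=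
  pushout (coneOfDiagramInitial hz Z).π ((Functor.const D).map (terminal.from (Z.obj z)))

noncomputable def isTerminalPointingObj (hz : IsInitial z) (Z : D ⥤ A) :
    IsTerminal ((pointingObj hz Z).obj z) := by
  have hleft : IsIso ((coneOfDiagramInitial hz Z).π.app z) := by
    simp only [coneOfDiagramInitial_π_app, hz.hom_ext (hz.to z) (𝟙 z)]
    infer_instance
  have hP := (IsPushout.of_hasPushout (coneOfDiagramInitial hz Z).π
    ((Functor.const D).map (terminal.from (Z.obj z)))).app z
  exact terminalIsTerminal.ofIso (@asIso _ _ _ _ _ hP.isIso_inr_of_isIso)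

noncomputable def pointingObjHomEquiv (hz : IsInitial z) (Z : D ⥤ A) {W : D ⥤ A}
    (hW : IsTerminal (W.obj z)) : (pointingObj hz Z ⟶ W) ≃ (Z ⟶ W) where
  toFun h := pushout.inl _ _ ≫ h
  invFun f := pushout.desc f ((Functor.const D).map (hW.from _) ≫ (coneOfDiagramInitial hz W).π)
    (natTrans_ext_of_isInitial hz (hW.hom_ext _ _))
  left_inv h := pushout.hom_ext (pushout.inl_desc _ _ _)
    (by rw [pushout.inr_desc]; exact natTrans_ext_of_isInitial hz (hW.hom_ext _ _))
  right_inv f := pushout.inl_desc _ _ _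

end Pointing

section Reflection

variable {D : Type v} [SmallCategory D] {A : Type u} [Category.{v} A]
  [HasPushouts A] [HasTerminal A] {z : D}

noncomputable def pointingPtdDiag (hz : IsZero z) (Z : D ⥤ A) : PtdDiag D A :=
  ⟨pointingObj hz.isInitial Z, fun _ hd =>
    ⟨(isTerminalPointingObj hz.isInitial Z).ofIso ((pointingObj _ Z).mapIso (hz.iso hd))⟩⟩

noncomputable def pointingHomEquiv (hz : IsZero z) (Z : D ⥤ A) (W : PtdDiag D A) :
    (pointingPtdDiag hz Z ⟶ W) ≃ (Z ⟶ W.obj) :=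
  InducedCategory.homEquiv.trans (pointingObjHomEquiv hz.isInitial Z (W.property z hz).some)

lemma pointingHomEquiv_comp (hz : IsZero z) (Z : D ⥤ A) (W W' : PtdDiag D A) (g : W ⟶ W')
    (h : pointingPtdDiag hz Z ⟶ W) :
    pointingHomEquiv hz Z W' (h ≫ g) = pointingHomEquiv hz Z W h ≫ g.hom :=
  (Category.assoc (pushout.inl _ _) h.hom g.hom).symm

noncomputable def pointing (hz : IsZero z) : (D ⥤ A) ⥤ PtdDiag D A :=
  Adjunction.leftAdjointOfEquiv (G := ObjectProperty.ι _) (pointingHomEquiv hz)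
    (pointingHomEquiv_comp hz)

noncomputable def pointingAdjunction (hz : IsZero z) :
    pointing (A := A) hz ⊣ ObjectProperty.ι _ :=
  Adjunction.adjunctionOfEquivLeft (G := ObjectProperty.ι _) (pointingHomEquiv hz)
    (pointingHomEquiv_comp hz)

end Reflection

/-- **Proposition `Li-adj`.** The precomposition functor `i^* : D*-A ⥤ C*-A`
admits a left adjoint `L`. -/
theorem istar_hasLeftAdjoint {C D : Type v} [SmallCategory C] [SmallCategory D]
    (zC : C) (hzC : IsZero zC) (i : C ⥤ D) (hi : IsZero (i.obj zC))
    (A : Type u) [Category.{v} A] [HasLimits A] [HasColimits A] :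
    ∃ L : PtdDiag C A ⥤ PtdDiag D A, Nonempty (L ⊣ istar zC hzC i hi A) :=
  ⟨ObjectProperty.ι _ ⋙ i.lan ⋙ pointing hi,
    ⟨((i.lanAdjunction A).comp (pointingAdjunction hi)).restrictFullyFaithful
      (ObjectProperty.fullyFaithfulι _) (Functor.FullyFaithful.id _) (Iso.refl _) (Iso.refl _)⟩⟩
end

section
/- (Pointed Yoneda density, as used in the proof of Lemma "eta-iso".) Let C be a small category with a zero object, A a category with all small limits and all small colimits, X : C ⥤ A a functor sending the zero object of C to a terminal object of A, and p an object of C. Then the canonical morphism from the coend ∫^{n ∈ C} ⋁_{Hom°_C(n, p)} X(n) to X(p) — the unique morphism whose composite with each coend structure morphism, restricted to the wedge summand indexed by a nonzero morphism θ : n → p, equals X(θ) — is an isomorphism in A. -/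
open CategoryTheory CategoryTheory.Limits

universe v u

/-- A morphism factors through a zero object (i.e. is a zero morphism). -/
def FactorsThroughZero {E : Type*} [Category E] {a b : E} (f : a ⟶ b) : Prop :=
  ∃ (z : E) (_ : IsZero z) (g : a ⟶ z) (h : z ⟶ b), g ≫ h = f

/-- `Hom°(a, b)`: the set of nonzero morphisms from `a` to `b`. -/
def NonzeroHom {E : Type*} [Category E] (a b : E) : Type _ :=
  {f : a ⟶ b // ¬ FactorsThroughZero f}

variable {C : Type v} [SmallCategory C] {A : Type u} [Category.{v} A]
  [HasLimits A] [HasColimits A]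

section

variable (zC : C) (hzC : IsZero zC) (X : C ⥤ A)
  (hX : ∀ c : C, IsZero c → Nonempty (IsTerminal (X.obj c))) (p : C)

/-- The wedge `⋁_{Hom°(n, p)} X(m)`: the wide pushout in `A` of copies of `X(m)` indexed
by the nonzero morphisms `n ⟶ p`, under the terminal object `X(zC)`, each copy pointed by
the image under `X` of the unique morphism `zC ⟶ m`.  (When the indexing set is empty this
wide pushout is the terminal object `X(zC)`.) -/
noncomputable abbrev wedgeObj (n m : C) : A :=
  widePushout (X.obj zC) (fun _ : NonzeroHom n p => X.obj m) (fun _ => X.map (hzC.to_ m))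

/-- The covariant action of the integrand, via `X`. -/
noncomputable def wedgeCov {m m' : C} (n : C) (g : m ⟶ m') :
    wedgeObj zC hzC X p n m ⟶ wedgeObj zC hzC X p n m' :=
  WidePushout.desc (WidePushout.head (fun _ : NonzeroHom n p => X.map (hzC.to_ m')))
    (fun θ => X.map g ≫ WidePushout.ι (fun _ : NonzeroHom n p => X.map (hzC.to_ m')) θ)
    (fun θ => by
      rw [← Category.assoc, ← X.map_comp, hzC.eq_of_src (hzC.to_ m ≫ g) (hzC.to_ m')]
      exact WidePushout.arrow_ι (fun _ : NonzeroHom n p => X.map (hzC.to_ m')) θ)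

open Classical in
/-- The contravariant action of the integrand, via precomposition of the indexing nonzero
morphisms; a composite which becomes zero is sent through the basepoint. -/
noncomputable def wedgeContra {n n' : C} (m : C) (h : n ⟶ n') :
    wedgeObj zC hzC X p n' m ⟶ wedgeObj zC hzC X p n m :=
  WidePushout.desc (WidePushout.head (fun _ : NonzeroHom n p => X.map (hzC.to_ m)))
    (fun θ =>
      if hθ : FactorsThroughZero (h ≫ θ.val)
      then (hX zC hzC).some.from (X.obj m) ≫
        WidePushout.head (fun _ : NonzeroHom n p => X.map (hzC.to_ m))
      else WidePushout.ι (fun _ : NonzeroHom n p => X.map (hzC.to_ m))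
        (⟨h ≫ θ.val, hθ⟩ : NonzeroHom n p))
    (fun θ => by
      beta_reduce
      split_ifs with hθ
      · rw [← Category.assoc,
          (hX zC hzC).some.hom_ext
            (X.map (hzC.to_ m) ≫ (hX zC hzC).some.from (X.obj m)) (𝟙 _),
          Category.id_comp]
      · exact WidePushout.arrow_ι (fun _ : NonzeroHom n p => X.map (hzC.to_ m)) _)

/-- The coend `∫^{n ∈ C} ⋁_{Hom°(n, p)} X(n)`, presented as the coequalizer of the two
canonical morphisms `∐_{(f : n ⟶ n')} ⋁_{Hom°(n', p)} X(n) ⇉ ∐_{n} ⋁_{Hom°(n, p)} X(n)`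
given by the contravariant and the covariant actions of the integrand. -/
noncomputable def wedgeCoend : A :=
  coequalizer
    (Sigma.desc (fun σ : Σ n n' : C, n ⟶ n' =>
      wedgeContra zC hzC X hX p σ.1 σ.2.2 ≫
        Sigma.ι (fun n : C => wedgeObj zC hzC X p n n) σ.1))
    (Sigma.desc (fun σ : Σ n n' : C, n ⟶ n' =>
      wedgeCov zC hzC X p σ.2.1 σ.2.2 ≫
        Sigma.ι (fun n : C => wedgeObj zC hzC X p n n) σ.2.1))

/-- The canonical morphism from the coend `∫^{n ∈ C} ⋁_{Hom°(n, p)} X(n)` to `X(p)`: the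
unique morphism whose composite with each coend structure morphism, restricted to the
wedge summand indexed by a nonzero morphism `θ : n ⟶ p`, equals `X(θ)`. -/
noncomputable def wedgeCoendToX : wedgeCoend zC hzC X hX p ⟶ X.obj p :=
  coequalizer.desc
    (Sigma.desc fun n : C =>
      WidePushout.desc (X.map (hzC.to_ p)) (fun θ : NonzeroHom n p => X.map θ.val)
        (fun θ => by rw [← X.map_comp, hzC.eq_of_src (hzC.to_ n ≫ θ.val) (hzC.to_ p)]))
    (by
      apply CategoryTheory.Limits.Sigma.hom_ext
      intro σ
      obtain ⟨n, n', φ⟩ := σ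
      rw [← Category.assoc, ← Category.assoc, CategoryTheory.Limits.Sigma.ι_desc, CategoryTheory.Limits.Sigma.ι_desc, Category.assoc, Category.assoc]
      simp only [CategoryTheory.Limits.Sigma.ι_desc]
      unfold wedgeContra wedgeCov
      apply WidePushout.hom_ext
      · intro θ
        erw [← Category.assoc, ← Category.assoc, WidePushout.ι_desc, WidePushout.ι_desc,
          Category.assoc, WidePushout.ι_desc]
        split_ifs with hθ
        · obtain ⟨z, hz, g, h, hgh⟩ := hθ
          have e1 : X.map φ ≫ X.map θ.val = X.map g ≫ X.map h := by
            rw [← X.map_comp, ← X.map_comp, hgh]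
          have e2 : X.map (hzC.to_ p) = X.map (hzC.to_ z) ≫ X.map h := by
            rw [← X.map_comp, hzC.eq_of_src (hzC.to_ p) (hzC.to_ z ≫ h)]
          have e3 : (hX zC hzC).some.from (X.obj n) ≫ X.map (hzC.to_ z) = X.map g :=
            (hX z hz).some.hom_ext _ _
          rw [Category.assoc, WidePushout.head_desc, e1, e2, ← Category.assoc, e3]
        · erw [WidePushout.ι_desc, ← X.map_comp]
      · erw [← Category.assoc, ← Category.assoc, WidePushout.head_desc, WidePushout.head_desc,
          WidePushout.head_desc, WidePushout.head_desc])

/-!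
The inverse sends `X(p)` to the summand of `⋁_{Hom°(p, p)} X(p)` indexed by `𝟙 p` (to the
basepoint if `p` is itself zero), so that going back to `X(p)` gives `X(𝟙 p)`. In the other
direction, the coend relation for `θ : n ⟶ p` identifies the `θ`-summand of the `n`-th wedge
with `X(θ)` followed by the `𝟙 p`-summand of the `p`-th wedge, while all basepoints are
identified with each other through the zero object.
-/

lemma FactorsThroughZero.precomp {E : Type*} [Category E] {a b c : E} (g : a ⟶ b) {f : b ⟶ c}
    (hf : FactorsThroughZero f) : FactorsThroughZero (g ≫ f) := by
  obtain ⟨z, hz, f₁, f₂, rfl⟩ := hf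
  exact ⟨z, hz, g ≫ f₁, f₂, Category.assoc _ _ _⟩

omit [HasLimits A] [HasColimits A] in
lemma FactorsThroughZero.map_eq {a b : C} {f : a ⟶ b} (hf : FactorsThroughZero f) :
    X.map f = (hX zC hzC).some.from (X.obj a) ≫ X.map (hzC.to_ b) := by
  obtain ⟨z, hz, f₁, f₂, rfl⟩ := hf
  obtain ⟨hXz⟩ := hX z hz
  rw [hzC.eq_of_src (hzC.to_ b) (hzC.to_ z ≫ f₂), X.map_comp, X.map_comp, ← Category.assoc,
    hXz.hom_ext ((hX zC hzC).some.from _ ≫ X.map (hzC.to_ z)) (X.map f₁)]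

-- Classical decidability, as in `wedgeContra`, which then unfolds to `wedgeSummand`.
open Classical in
noncomputable def wedgeSummand {n : C} (m : C) (f : n ⟶ p) :
    X.obj m ⟶ wedgeObj zC hzC X p n m :=
  if hf : FactorsThroughZero f then
    (hX zC hzC).some.from (X.obj m) ≫
      WidePushout.head (fun _ : NonzeroHom n p => X.map (hzC.to_ m))
  else WidePushout.ι (fun _ : NonzeroHom n p => X.map (hzC.to_ m)) ⟨f, hf⟩

omit [HasLimits A] in
lemma ι_wedgeContra {n n' : C} (m : C) (h : n ⟶ n') (θ : NonzeroHom n' p) :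
    WidePushout.ι (fun _ : NonzeroHom n' p => X.map (hzC.to_ m)) θ ≫
        wedgeContra zC hzC X hX p m h =
      wedgeSummand zC hzC X hX p m (h ≫ θ.val) :=
  WidePushout.ι_desc _ _ _ _ θ

omit [HasLimits A] in
lemma head_wedgeContra {n n' : C} (m : C) (h : n ⟶ n') :
    WidePushout.head (fun _ : NonzeroHom n' p => X.map (hzC.to_ m)) ≫
        wedgeContra zC hzC X hX p m h =
      WidePushout.head (fun _ : NonzeroHom n p => X.map (hzC.to_ m)) :=
  WidePushout.head_desc _ _ _ _

omit [HasLimits A] in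
lemma head_wedgeCov {m m' : C} (n : C) (g : m ⟶ m') :
    WidePushout.head (fun _ : NonzeroHom n p => X.map (hzC.to_ m)) ≫ wedgeCov zC hzC X p n g =
      WidePushout.head (fun _ : NonzeroHom n p => X.map (hzC.to_ m')) :=
  WidePushout.head_desc _ _ _ _

omit [HasLimits A] in
lemma ι_wedgeCov {m m' : C} (n : C) (g : m ⟶ m') (θ : NonzeroHom n p) :
    WidePushout.ι (fun _ : NonzeroHom n p => X.map (hzC.to_ m)) θ ≫ wedgeCov zC hzC X p n g =
      X.map g ≫ WidePushout.ι (fun _ : NonzeroHom n p => X.map (hzC.to_ m')) θ :=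
  WidePushout.ι_desc _ _ _ _ θ

noncomputable abbrev wedgeCoendContraMap :
    (∐ fun σ : Σ n n' : C, n ⟶ n' => wedgeObj zC hzC X p σ.2.1 σ.1) ⟶
      ∐ fun n : C => wedgeObj zC hzC X p n n :=
  Sigma.desc fun σ => wedgeContra zC hzC X hX p σ.1 σ.2.2 ≫
    Sigma.ι (fun n : C => wedgeObj zC hzC X p n n) σ.1

noncomputable abbrev wedgeCoendCovMap :
    (∐ fun σ : Σ n n' : C, n ⟶ n' => wedgeObj zC hzC X p σ.2.1 σ.1) ⟶
      ∐ fun n : C => wedgeObj zC hzC X p n n :=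
  Sigma.desc fun σ => wedgeCov zC hzC X p σ.2.1 σ.2.2 ≫
    Sigma.ι (fun n : C => wedgeObj zC hzC X p n n) σ.2.1

noncomputable def wedgeCoendι (n : C) : wedgeObj zC hzC X p n n ⟶ wedgeCoend zC hzC X hX p :=
  Sigma.ι (fun n : C => wedgeObj zC hzC X p n n) n ≫
    coequalizer.π (wedgeCoendContraMap zC hzC X hX p) (wedgeCoendCovMap zC hzC X p)

omit [HasLimits A] in
lemma wedgeContra_comp_wedgeCoendι {n n' : C} (φ : n ⟶ n') :
    wedgeContra zC hzC X hX p n φ ≫ wedgeCoendι zC hzC X hX p n =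
      wedgeCov zC hzC X p n' φ ≫ wedgeCoendι zC hzC X hX p n' := by
  have h := Sigma.ι _ ⟨n, n', φ⟩ ≫=
    coequalizer.condition (wedgeCoendContraMap zC hzC X hX p) (wedgeCoendCovMap zC hzC X p)
  simp only [Sigma.ι_desc_assoc, Category.assoc] at h
  exact h

omit [HasLimits A] in
lemma wedgeCoend_hom_ext {Y : A} {f g : wedgeCoend zC hzC X hX p ⟶ Y}
    (h : ∀ n, wedgeCoendι zC hzC X hX p n ≫ f = wedgeCoendι zC hzC X hX p n ≫ g) : f = g :=
  coequalizer.hom_ext <| Sigma.hom_ext _ _ fun n =>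
    (Category.assoc _ _ _).symm.trans ((h n).trans (Category.assoc _ _ _))

omit [HasLimits A] in
lemma head_comp_wedgeCoendι {n n' : C} (φ : n ⟶ n') :
    WidePushout.head (fun _ : NonzeroHom n p => X.map (hzC.to_ n)) ≫
        wedgeCoendι zC hzC X hX p n =
      WidePushout.head (fun _ : NonzeroHom n' p => X.map (hzC.to_ n')) ≫
        wedgeCoendι zC hzC X hX p n' := by
  have h := WidePushout.head (fun _ : NonzeroHom n' p => X.map (hzC.to_ n)) ≫=
    wedgeContra_comp_wedgeCoendι zC hzC X hX p φ
  rwa [← Category.assoc, ← Category.assoc, head_wedgeContra, head_wedgeCov] at h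

omit [HasLimits A] in
lemma map_comp_wedgeSummand_comp_wedgeCoendι {n n' : C} (φ : n ⟶ n') (f : n' ⟶ p) :
    X.map φ ≫ wedgeSummand zC hzC X hX p n' f ≫ wedgeCoendι zC hzC X hX p n' =
      wedgeSummand zC hzC X hX p n (φ ≫ f) ≫ wedgeCoendι zC hzC X hX p n := by
  by_cases hf : FactorsThroughZero f
  · rw [wedgeSummand, dif_pos hf, wedgeSummand, dif_pos (hf.precomp φ), Category.assoc,
      reassoc_of% (hX zC hzC).some.comp_from (X.map φ), Category.assoc,
      head_comp_wedgeCoendι zC hzC X hX p φ]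
  · have h := WidePushout.ι (fun _ : NonzeroHom n' p => X.map (hzC.to_ n)) ⟨f, hf⟩ ≫=
      wedgeContra_comp_wedgeCoendι zC hzC X hX p φ
    rw [← Category.assoc, ← Category.assoc, ι_wedgeContra zC hzC X hX p n φ ⟨f, hf⟩,
      ι_wedgeCov zC hzC X p n' φ ⟨f, hf⟩, Category.assoc] at h
    rw [wedgeSummand, dif_neg hf]
    exact h.symm

noncomputable def wedgeToX (n : C) : wedgeObj zC hzC X p n n ⟶ X.obj p :=
  WidePushout.desc (X.map (hzC.to_ p)) (fun θ : NonzeroHom n p => X.map θ.val)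
    (fun θ => by rw [← X.map_comp, hzC.eq_of_src (hzC.to_ n ≫ θ.val) (hzC.to_ p)])

omit [HasLimits A] in
lemma wedgeCoendι_comp_wedgeCoendToX (n : C) :
    wedgeCoendι zC hzC X hX p n ≫ wedgeCoendToX zC hzC X hX p = wedgeToX zC hzC X p n := by
  simp only [wedgeCoendι, wedgeCoendToX, wedgeCoend, Category.assoc, coequalizer.π_desc,
    Sigma.ι_desc, wedgeToX]

omit [HasLimits A] in
lemma wedgeSummand_comp_wedgeToX {n : C} (f : n ⟶ p) :
    wedgeSummand zC hzC X hX p n f ≫ wedgeToX zC hzC X p n = X.map f := by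
  rw [wedgeSummand]
  split_ifs with hf
  · rw [Category.assoc, wedgeToX, WidePushout.head_desc, hf.map_eq zC hzC X hX]
  · exact WidePushout.ι_desc _ _ _ _ (⟨f, hf⟩ : NonzeroHom n p)

noncomputable def xToWedgeCoend : X.obj p ⟶ wedgeCoend zC hzC X hX p :=
  wedgeSummand zC hzC X hX p p (𝟙 p) ≫ wedgeCoendι zC hzC X hX p p

omit [HasLimits A] in
lemma xToWedgeCoend_comp_wedgeCoendToX :
    xToWedgeCoend zC hzC X hX p ≫ wedgeCoendToX zC hzC X hX p = 𝟙 (X.obj p) := by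
  rw [xToWedgeCoend, Category.assoc, wedgeCoendι_comp_wedgeCoendToX, wedgeSummand_comp_wedgeToX,
    X.map_id]

omit [HasLimits A] in
lemma wedgeToX_comp_xToWedgeCoend (n : C) :
    wedgeToX zC hzC X p n ≫ xToWedgeCoend zC hzC X hX p = wedgeCoendι zC hzC X hX p n := by
  apply WidePushout.hom_ext
  · intro θ
    rw [wedgeToX, WidePushout.ι_desc_assoc, xToWedgeCoend,
      map_comp_wedgeSummand_comp_wedgeCoendι, Category.comp_id, wedgeSummand, dif_neg θ.2]
    rfl
  · have hzero : FactorsThroughZero (hzC.to_ p ≫ 𝟙 p) :=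
      ⟨zC, hzC, 𝟙 zC, _, Category.id_comp _⟩
    rw [wedgeToX, WidePushout.head_desc_assoc, xToWedgeCoend,
      map_comp_wedgeSummand_comp_wedgeCoendι, wedgeSummand, dif_pos hzero, IsTerminal.from_self,
      Category.id_comp, head_comp_wedgeCoendι zC hzC X hX p (hzC.to_ n)]

/-- **Pointed Yoneda density** (as used in the proof of Lemma `eta-iso`): if `X : C ⥤ A`
sends the zero object of `C` to a terminal object of `A`, then the canonical morphism
`∫^{n ∈ C} ⋁_{Hom°(n, p)} X(n) ⟶ X(p)` is an isomorphism in `A`. -/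
theorem wedgeCoendToX_isIso : IsIso (wedgeCoendToX zC hzC X hX p) := by
  refine ⟨xToWedgeCoend zC hzC X hX p, ?_, xToWedgeCoend_comp_wedgeCoendToX zC hzC X hX p⟩
  refine wedgeCoend_hom_ext zC hzC X hX p fun n => ?_
  rw [reassoc_of% wedgeCoendι_comp_wedgeCoendToX, wedgeToX_comp_xToWedgeCoend, Category.comp_id]

end
end
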